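/- Let F be a field of characteristic different from 2, m ≥ 1, k ≥ 1, and let S be any type. Let f be a function from matrices indexed by multi-indices (Fin k → Fin m) over F to S such that f(sᵗ * M * s) = f(M) for every matrix M and every invertible matrix s (i.e., f is an invariant of quadratic forms under congruence). If A, B : Matrix (Fin m) (Fin m × Fin m) F are MSCs of isomorphic algebras, i.e., B = τ(g, A) for some invertible g, then f(T̃r((B^t̄ B)^⊗̄k)) = f(T̃r((A^t̄ A)^⊗̄k)). (Theorem 1: invariants of the quadratic forms given by the matrices T̃r((X^t̄ X)^⊗̄k) are invariants of m-dimensional algebras.) -/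

import Mathlib

open Matrix Kronecker

/-- The `i`-th block of a matrix of structure constants. -/
def blk {F : Type*} {m : ℕ} (A : Matrix (Fin m) (Fin m × Fin m) F) (i : Fin m) :
    Matrix (Fin m) (Fin m) F := fun a b => A a (i, b)

/-- The matrix `T̃r((Aᵗ̄A)^⊗̄k)`, indexed by multi-indices, whose `(i, j)` entry is the trace
of the ordered product `A_{i 0} A_{j 0} A_{i 1} A_{j 1} ⋯ A_{i (k-1)} A_{j (k-1)}`. -/
def trFormPow {F : Type*} [Field F] {m : ℕ} (k : ℕ) (A : Matrix (Fin m) (Fin m × Fin m) F) :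
    Matrix (Fin k → Fin m) (Fin k → Fin m) F :=
  fun i j => ((List.ofFn fun l : Fin k => blk A (i l) * blk A (j l)).prod).trace

/-! Each block of `τ(g, A)` is `g (∑ₐ (g⁻¹)ₐₚ Aₐ) g⁻¹`. In the trace of an ordered product of
blocks the conjugations by `g` cancel, and expanding the product multilinearly gives
`T̃r((Bᵗ̄B)^⊗̄k) = Hᵀ T̃r((Aᵗ̄A)^⊗̄k) H` with `H = (g⁻¹)^{⊗k}` invertible. So the two quadratic
forms are congruent and every congruence invariant takes the same value on them. -/

theorem List.prod_ofFn_conj {M : Type*} [Monoid M] {g h : M} (hgh : g * h = 1)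
    (hhg : h * g = 1) : ∀ {k : ℕ} (X : Fin k → M),
    (List.ofFn fun l => g * X l * h).prod = g * (List.ofFn X).prod * h
  | 0, X => by simp [hgh]
  | k + 1, X => by
      rw [List.ofFn_succ, List.prod_cons, List.prod_ofFn_conj hgh hhg, List.ofFn_succ,
        List.prod_cons]
      simp only [← mul_assoc]
      rw [mul_assoc (g * X 0) h g, hhg, mul_one]

theorem List.prod_ofFn_sum {R : Type*} [Semiring R] {ι : Type*} [Fintype ι] :
    ∀ {k : ℕ} (X : Fin k → ι → R),
    (List.ofFn fun l => ∑ p, X l p).prod = ∑ φ : Fin k → ι, (List.ofFn fun l => X l (φ l)).prod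
  | 0, X => by simp
  | k + 1, X => by
      rw [List.ofFn_succ, List.prod_cons, List.prod_ofFn_sum, Finset.sum_mul_sum,
        ← (Fin.consEquiv fun _ : Fin (k + 1) => ι).sum_comp, Fintype.sum_prod_type]
      simp [Fin.consEquiv, List.ofFn_succ]

theorem List.prod_ofFn_smul {K R : Type*} [CommSemiring K] [Semiring R] [Algebra K R] :
    ∀ {k : ℕ} (c : Fin k → K) (N : Fin k → R),
    (List.ofFn fun l => c l • N l).prod = (∏ l, c l) • (List.ofFn N).prod
  | 0, c, N => by simp
  | k + 1, c, N => by
      rw [List.ofFn_succ, List.prod_cons, List.prod_ofFn_smul, smul_mul_smul_comm,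
        Fin.prod_univ_succ, List.ofFn_succ, List.prod_cons]

namespace Matrix
variable {n R : Type*} [Fintype n] [DecidableEq n] [CommSemiring R]

def kroneckerPow (k : ℕ) : Matrix n n R →* Matrix (Fin k → n) (Fin k → n) R where
  toFun g := of fun a b => ∏ l, g (a l) (b l)
  map_one' := by
    ext a b
    by_cases hab : a = b
    · subst hab
      simp
    · obtain ⟨l, hl⟩ := Function.ne_iff.mp hab
      rw [of_apply, one_apply_ne hab]
      exact Finset.prod_eq_zero (Finset.mem_univ l) (one_apply_ne hl)
  map_mul' g h := by
    ext a b
    simp only [mul_apply, of_apply, Finset.prod_univ_sum, Fintype.piFinset_univ,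
      Finset.prod_mul_distrib]

theorem kroneckerPow_apply (k : ℕ) (g : Matrix n n R) (a b : Fin k → n) :
    kroneckerPow k g a b = ∏ l, g (a l) (b l) := rfl

theorem transpose_kroneckerPow_mul_mul_apply (k : ℕ) (h : Matrix n n R)
    (M : Matrix (Fin k → n) (Fin k → n) R) (i j : Fin k → n) :
    ((kroneckerPow k h)ᵀ * M * kroneckerPow k h) i j =
      ∑ φ : Fin k → n × n, (∏ l, h (φ l).1 (i l) * h (φ l).2 (j l)) *
        M (fun l => (φ l).1) (fun l => (φ l).2) := by
  rw [← (Equiv.arrowProdEquivProdArrow (Fin k) (fun _ => n) (fun _ => n)).symm.sum_comp,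
    Fintype.sum_prod_type, Finset.sum_comm]
  simp only [mul_apply, transpose_apply, kroneckerPow_apply, Finset.sum_mul,
    Equiv.arrowProdEquivProdArrow, Equiv.coe_fn_symm_mk, Finset.prod_mul_distrib]
  refine Finset.sum_congr rfl fun a _ => Finset.sum_congr rfl fun b _ => by ring

end Matrix

section
variable {m : ℕ}

theorem blk_mul_kronecker {R : Type*} [CommSemiring R] (A : Matrix (Fin m) (Fin m × Fin m) R)
    (g h : Matrix (Fin m) (Fin m) R) (p : Fin m) :
    blk (g * A * (h ⊗ₖ h)) p = g * (∑ a, h a p • blk A a) * h := by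
  ext x y
  simp only [blk, mul_apply, kroneckerMap_apply, Matrix.sum_apply, Matrix.smul_apply,
    smul_eq_mul, Fintype.sum_prod_type, Finset.sum_mul, Finset.mul_sum]
  rw [Finset.sum_comm]
  exact Finset.sum_congr rfl fun a _ => Finset.sum_congr rfl fun b _ =>
    Finset.sum_congr rfl fun c _ => by ring

theorem blk_mul_blk_of_eq_conj {R : Type*} [CommRing R]
    {A B : Matrix (Fin m) (Fin m × Fin m) R}
    {g : Matrix (Fin m) (Fin m) R} (hg : IsUnit g) (hB : B = g * A * (g⁻¹ ⊗ₖ g⁻¹)) (p q : Fin m) :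
    blk B p * blk B q =
      g * (∑ x : Fin m × Fin m, (g⁻¹ x.1 p * g⁻¹ x.2 q) • (blk A x.1 * blk A x.2)) * g⁻¹ := by
  have hdet := (isUnit_iff_isUnit_det g).mp hg
  calc _ = g * ((∑ a, g⁻¹ a p • blk A a) * ∑ b, g⁻¹ b q • blk A b) * g⁻¹ := by
        simp only [hB, blk_mul_kronecker, mul_assoc, nonsing_inv_mul_cancel_left (h := hdet)]
    _ = _ := by rw [Finset.sum_mul_sum, Fintype.sum_prod_type]; simp only [smul_mul_smul_comm]

theorem trFormPow_eq_transpose_mul_mul_kroneckerPow {F : Type*} [Field F] (k : ℕ)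
    {A B : Matrix (Fin m) (Fin m × Fin m) F}
    {g : Matrix (Fin m) (Fin m) F} (hg : IsUnit g) (hB : B = g * A * (g⁻¹ ⊗ₖ g⁻¹)) :
    trFormPow k B = (kroneckerPow k g⁻¹)ᵀ * trFormPow k A * kroneckerPow k g⁻¹ := by
  have hdet := (isUnit_iff_isUnit_det g).mp hg
  ext i j
  rw [transpose_kroneckerPow_mul_mul_apply]
  simp only [trFormPow, blk_mul_blk_of_eq_conj hg hB]
  rw [List.prod_ofFn_conj (mul_nonsing_inv g hdet) (nonsing_inv_mul g hdet), trace_mul_cycle,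
    nonsing_inv_mul g hdet, one_mul, List.prod_ofFn_sum, trace_sum]
  simp only [List.prod_ofFn_smul, trace_smul, smul_eq_mul, Finset.prod_mul_distrib]

end

theorem stmt_5_general (F : Type*) [Field F]
    (m k : ℕ) (S : Type*)
    (f : Matrix (Fin k → Fin m) (Fin k → Fin m) F → S)
    (hf : ∀ (M : Matrix (Fin k → Fin m) (Fin k → Fin m) F)
      (s : Matrix (Fin k → Fin m) (Fin k → Fin m) F), IsUnit s → f (sᵀ * M * s) = f M)
    (A B : Matrix (Fin m) (Fin m × Fin m) F)
    (g : Matrix (Fin m) (Fin m) F) (hg : IsUnit g)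
    (hB : B = g * A * (g⁻¹ ⊗ₖ g⁻¹)) :
    f (trFormPow k B) = f (trFormPow k A) := by
  rw [trFormPow_eq_transpose_mul_mul_kroneckerPow k hg hB]
  exact hf _ _ ((isUnit_nonsing_inv_iff.mpr hg).map (kroneckerPow k))

theorem stmt_5 (F : Type*) [Field F] (hchar : ringChar F ≠ 2)
    (m k : ℕ) (hm : 1 ≤ m) (hk : 1 ≤ k) (S : Type*)
    (f : Matrix (Fin k → Fin m) (Fin k → Fin m) F → S)
    (hf : ∀ (M : Matrix (Fin k → Fin m) (Fin k → Fin m) F)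
      (s : Matrix (Fin k → Fin m) (Fin k → Fin m) F), IsUnit s → f (sᵀ * M * s) = f M)
    (A B : Matrix (Fin m) (Fin m × Fin m) F)
    (g : Matrix (Fin m) (Fin m) F) (hg : IsUnit g)
    (hB : B = g * A * (g⁻¹ ⊗ₖ g⁻¹)) :
    f (trFormPow k B) = f (trFormPow k A) :=
  stmt_5_general F m k S f hf A B g hg hB
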